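/- Let R = ℂ[x,y,z] and W = xyz. For m ≥ 0, consider the ℤ/2-graded free R-module P with odd generators C₀,…,C_{2m} (where indices C₁,…,C_{2m-1} also appear; all Cᵢ, i = 0,…,2m, are odd) and even generators D₀,…,D_{2m}, with odd map δ defined by (setting the area parameter T^A = 1): δ(C₀) = zD₀; δ(D₀) = xyC₀; δ(C₁) = D₁ − D₀; δ(D₁) = xyzC₁ + xyC₀; δ(C_{2k}) = zx(−yD_{2k} + D_{2k−1}) for 1 ≤ k ≤ m; δ(D_{2k}) = −C_{2k} + x(zC_{2k−1} + C_{2k−2}) for 1 ≤ k ≤ m; δ(C_{2k+1}) = D_{2k+1} + xyD_{2k} − xD_{2k−1} for 1 ≤ k ≤ m−1; δ(D_{2k+1}) = xyzC_{2k+1} + xyC_{2k} for 1 ≤ k ≤ m−1. Then δ² = xyz·id, so (P, δ) is a matrix factorization of xyz. -/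

import Mathlib

noncomputable section

open MvPolynomial Matrix

/-- `R = ℂ[x,y,z]`. -/
abbrev Rpoly : Type := MvPolynomial (Fin 3) ℂ

def xP : Rpoly := X 0
def yP : Rpoly := X 1
def zP : Rpoly := X 2

/-- `Aent i j` = coefficient of `D_j` in `δ(C_i)` (with the area parameter `T^A = 1`):
`δ(C₀) = z D₀`; `δ(C₁) = D₁ − D₀`;
`δ(C_{2k}) = zx(−y D_{2k} + D_{2k−1})` for `1 ≤ k ≤ m`;
`δ(C_{2k+1}) = D_{2k+1} + xy D_{2k} − x D_{2k−1}` for `1 ≤ k ≤ m−1`. -/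
def Aent : ℕ → ℕ → Rpoly := fun i j =>
  if i = 0 then (if j = 0 then zP else 0)
  else if i = 1 then (if j = 1 then 1 else if j = 0 then -1 else 0)
  else if i % 2 = 0 then
    (if j = i then -(xP * yP * zP) else if j + 1 = i then zP * xP else 0)
  else
    (if j = i then 1 else if j + 1 = i then xP * yP else if j + 2 = i then -xP else 0)

/-- `Bent i j` = coefficient of `C_j` in `δ(D_i)`:
`δ(D₀) = xy C₀`; `δ(D₁) = xyz C₁ + xy C₀`;
`δ(D_{2k}) = −C_{2k} + x(z C_{2k−1} + C_{2k−2})` for `1 ≤ k ≤ m`;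
`δ(D_{2k+1}) = xyz C_{2k+1} + xy C_{2k}` for `1 ≤ k ≤ m−1`. -/
def Bent : ℕ → ℕ → Rpoly := fun i j =>
  if i = 0 then (if j = 0 then xP * yP else 0)
  else if i = 1 then (if j = 1 then xP * yP * zP else if j = 0 then xP * yP else 0)
  else if i % 2 = 0 then
    (if j = i then -1 else if j + 1 = i then xP * zP else if j + 2 = i then xP else 0)
  else
    (if j = i then xP * yP * zP else if j + 1 = i then xP * yP else 0)

/-- The matrix of `δ` on the odd generators `C₀, …, C_{2m}`. -/
def Amat (m : ℕ) : Matrix (Fin (2 * m + 1)) (Fin (2 * m + 1)) Rpoly :=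
  fun i j => Aent (i : ℕ) (j : ℕ)

/-- The matrix of `δ` on the even generators `D₀, …, D_{2m}`. -/
def Bmat (m : ℕ) : Matrix (Fin (2 * m + 1)) (Fin (2 * m + 1)) Rpoly :=
  fun i j => Bent (i : ℕ) (j : ℕ)

/-- The odd endomorphism `δ` of `P = (⊕ᵢ R·Cᵢ) ⊕ (⊕ᵢ R·Dᵢ)`, with a general
element represented by its pair of coordinate vectors `(c, d)`:
`δ(c, d) = (Bᵀ·d, Aᵀ·c)` (so that `δ(Cᵢ) = Σⱼ Aᵢⱼ Dⱼ` and `δ(Dᵢ) = Σⱼ Bᵢⱼ Cⱼ`). -/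
def deltaBig (m : ℕ) :
    ((Fin (2 * m + 1) → Rpoly) × (Fin (2 * m + 1) → Rpoly)) →ₗ[Rpoly]
      ((Fin (2 * m + 1) → Rpoly) × (Fin (2 * m + 1) → Rpoly)) :=
  LinearMap.prod
    ((Matrix.toLin' (Bmat m)ᵀ) ∘ₗ LinearMap.snd Rpoly _ _)
    ((Matrix.toLin' (Amat m)ᵀ) ∘ₗ LinearMap.fst Rpoly _ _)

/-!
The formulas for `δ` define ℕ × ℕ matrices `Aent`, `Bent`, both lower triangular with band
width two, so row `i` of their product involves only the rows `i - 2, i - 1, i` of the second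
factor. Writing each row of `Aent` and `Bent` as a combination of unit vectors (one formula per
parity of the row index), row `i` of `Aent * Bent` and of `Bent * Aent` becomes a three-term
combination that equals `xyz • eᵢ`. Lower triangularity lets these identities pass to the
truncations `Amat m`, `Bmat m`, and then `δ²(c, d) = ((A B)ᵀ c, (B A)ᵀ d) = xyz • (c, d)`.
-/

section Banded

variable {R M : Type*} [Semiring R] [AddCommMonoid M] [Module R M] {f : ℕ → ℕ → R}

theorem sum_range_smul_eq_of_lowerTriangular (hf : ∀ ⦃i k⦄, i < k → f i k = 0)
    (g : ℕ → M) {n i : ℕ} (hi : i < n) :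
    ∑ k ∈ Finset.range n, f i k • g k = ∑ k ∈ Finset.range (i + 1), f i k • g k := by
  refine (Finset.sum_subset (by simpa using hi) fun k hk hk' => ?_).symm
  rw [hf (by simp at hk hk'; omega), zero_smul]

theorem sum_range_add_smul_eq_of_band {w : ℕ} (hf : ∀ ⦃i k⦄, k + w < i → f i k = 0)
    (g : ℕ → M) (a : ℕ) :
    ∑ k ∈ Finset.range (a + w + 1), f (a + w) k • g k =
      ∑ t ∈ Finset.range (w + 1), f (a + w) (a + t) • g (a + t) := by
  rw [add_assoc, Finset.sum_range_add, Finset.sum_eq_zero fun k hk => ?_, zero_add]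
  rw [hf (by simp at hk; omega), zero_smul]

theorem of_mul_of_eq_smul_one_of_lowerTriangular {f g : ℕ → ℕ → R}
    (hf : ∀ ⦃i k⦄, i < k → f i k = 0) {c : R}
    (hfg : ∀ i, ∑ k ∈ Finset.range (i + 1), f i k • g k = c • Pi.single i 1) (n : ℕ) :
    (Matrix.of fun i j : Fin n => f i j) * (Matrix.of fun i j : Fin n => g i j) = c • 1 := by
  ext i j
  have hrow := congrFun (hfg i) j
  rw [← sum_range_smul_eq_of_lowerTriangular hf g i.isLt] at hrow
  simpa [Matrix.mul_apply, Matrix.one_apply, Fin.sum_univ_eq_sum_range (fun k => f i k * g k j),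
    Pi.single_apply, Fin.val_eq_val, eq_comm] using hrow

end Banded

section MatrixFactorization

variable {ι R : Type*} [Fintype ι] [DecidableEq ι] [CommRing R]

def matrixFactorizationEnd (A B : Matrix ι ι R) : Module.End R ((ι → R) × (ι → R)) :=
  LinearMap.prod (Matrix.toLin' Bᵀ ∘ₗ LinearMap.snd R _ _)
    (Matrix.toLin' Aᵀ ∘ₗ LinearMap.fst R _ _)

theorem matrixFactorizationEnd_apply_apply {A B : Matrix ι ι R} {c : R}
    (hAB : A * B = c • 1) (hBA : B * A = c • 1) (p : (ι → R) × (ι → R)) :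
    matrixFactorizationEnd A B (matrixFactorizationEnd A B p) = c • p := by
  simp [matrixFactorizationEnd, Matrix.mulVec_mulVec, ← Matrix.transpose_mul, hAB, hBA,
    Matrix.smul_mulVec]
  rfl

end MatrixFactorization

theorem Aent_eq_zero_of_lt {i k : ℕ} (hik : i < k) : Aent i k = 0 := by
  unfold Aent; split_ifs <;> first | rfl | omega

theorem Aent_eq_zero_of_add_two_lt {i k : ℕ} (hik : k + 2 < i) : Aent i k = 0 := by
  unfold Aent; split_ifs <;> first | rfl | omega

theorem Bent_eq_zero_of_lt {i k : ℕ} (hik : i < k) : Bent i k = 0 := by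
  unfold Bent; split_ifs <;> first | rfl | omega

theorem Bent_eq_zero_of_add_two_lt {i k : ℕ} (hik : k + 2 < i) : Bent i k = 0 := by
  unfold Bent; split_ifs <;> first | rfl | omega

theorem Aent_zero : Aent 0 = zP • Pi.single 0 1 := by
  funext j; simp [Aent, Pi.single_apply]

theorem Aent_one : Aent 1 = Pi.single 1 1 - Pi.single 0 1 := by
  funext j; by_cases h : j = 0 <;> simp [Aent, Pi.single_apply, h]

theorem Aent_two_mul_add_two (k : ℕ) :
    Aent (2 * k + 2) =
      -(xP * yP * zP) • Pi.single (2 * k + 2) 1 + (zP * xP) • Pi.single (2 * k + 1) 1 := by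
  funext j
  simp only [Aent, Pi.add_apply, Pi.smul_apply, Pi.single_apply]
  split_ifs <;> first | contradiction | omega | simp

theorem Aent_two_mul_add_three (k : ℕ) :
    Aent (2 * k + 3) =
      Pi.single (2 * k + 3) 1 + (xP * yP) • Pi.single (2 * k + 2) 1
        - xP • Pi.single (2 * k + 1) 1 := by
  funext j
  simp only [Aent, Pi.add_apply, Pi.sub_apply, Pi.smul_apply, Pi.single_apply]
  split_ifs <;> first | contradiction | omega | simp

theorem Bent_zero : Bent 0 = (xP * yP) • Pi.single 0 1 := by
  funext j; simp [Bent, Pi.single_apply]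

theorem Bent_two_mul_add_one (k : ℕ) :
    Bent (2 * k + 1) =
      (xP * yP * zP) • Pi.single (2 * k + 1) 1 + (xP * yP) • Pi.single (2 * k) 1 := by
  funext j
  simp only [Bent, Pi.add_apply, Pi.smul_apply, Pi.single_apply]
  split_ifs <;> first | contradiction | omega | simp

theorem Bent_two_mul_add_two (k : ℕ) :
    Bent (2 * k + 2) =
      -Pi.single (2 * k + 2) 1 + (xP * zP) • Pi.single (2 * k + 1) 1
        + xP • Pi.single (2 * k) 1 := by
  funext j
  simp only [Bent, Pi.add_apply, Pi.neg_apply, Pi.smul_apply, Pi.single_apply]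
  split_ifs <;> first | contradiction | omega | simp

theorem sum_Aent_smul_Bent (i : ℕ) :
    ∑ k ∈ Finset.range (i + 1), Aent i k • Bent k = (xP * yP * zP) • Pi.single i 1 := by
  match i with
  | 0 => simp [Aent_zero, Bent_zero]; module
  | 1 => simp [Finset.sum_range_succ, Aent_one, Bent_zero, Bent_two_mul_add_one 0]
  | a + 2 =>
    rw [sum_range_add_smul_eq_of_band (fun _ _ => Aent_eq_zero_of_add_two_lt)]
    obtain ⟨k, rfl | rfl⟩ := Nat.even_or_odd' a
    · simp [Finset.sum_range_succ, Aent_two_mul_add_two, Bent_two_mul_add_one,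
        Bent_two_mul_add_two, Pi.single_apply]
      module
    · have h := Bent_two_mul_add_one (k + 1)
      simp only [mul_add, mul_one, add_assoc, Nat.reduceAdd] at h
      simp [Finset.sum_range_succ, add_assoc, Aent_two_mul_add_three, Bent_two_mul_add_one,
        Bent_two_mul_add_two, h, Pi.single_apply]
      module

theorem sum_Bent_smul_Aent (i : ℕ) :
    ∑ k ∈ Finset.range (i + 1), Bent i k • Aent k = (xP * yP * zP) • Pi.single i 1 := by
  match i with
  | 0 => simp [Aent_zero, Bent_zero]; module
  | 1 => simp [Finset.sum_range_succ, Aent_zero, Aent_one, Bent_two_mul_add_one 0]; module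
  | 2 =>
    simp [Finset.sum_range_succ, Aent_zero, Aent_one, Aent_two_mul_add_two 0,
      Bent_two_mul_add_two 0, Pi.single_apply]
    module
  | a + 3 =>
    rw [show a + 3 = a + 1 + 2 by rfl,
      sum_range_add_smul_eq_of_band (fun _ _ => Bent_eq_zero_of_add_two_lt)]
    obtain ⟨k, rfl | rfl⟩ := Nat.even_or_odd' a
    · have h := Bent_two_mul_add_one (k + 1)
      simp only [mul_add, mul_one, add_assoc, Nat.reduceAdd] at h
      simp [Finset.sum_range_succ, add_assoc, Aent_two_mul_add_three, Aent_two_mul_add_two, h,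
        Pi.single_apply]
      module
    · have h := Bent_two_mul_add_two (k + 1)
      have h' := Aent_two_mul_add_two (k + 1)
      simp only [mul_add, mul_one, add_assoc, Nat.reduceAdd] at h h'
      simp [Finset.sum_range_succ, add_assoc, Aent_two_mul_add_three, Aent_two_mul_add_two, h, h',
        Pi.single_apply]
      module

theorem Amat_mul_Bmat (m : ℕ) : Amat m * Bmat m = (xP * yP * zP) • 1 :=
  of_mul_of_eq_smul_one_of_lowerTriangular (fun _ _ => Aent_eq_zero_of_lt) sum_Aent_smul_Bent _

theorem Bmat_mul_Amat (m : ℕ) : Bmat m * Amat m = (xP * yP * zP) • 1 :=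
  of_mul_of_eq_smul_one_of_lowerTriangular (fun _ _ => Bent_eq_zero_of_lt) sum_Bent_smul_Aent _

/-- `δ² = xyz · id`, i.e. the ℤ/2-graded free module with odd
generators `C₀,…,C_{2m}`, even generators `D₀,…,D_{2m}` and the odd map `δ`
defined by the formulas above is a matrix factorization of `W = xyz`. -/
theorem stmt13 (m : ℕ) :
    ∀ p : (Fin (2 * m + 1) → Rpoly) × (Fin (2 * m + 1) → Rpoly),
      deltaBig m (deltaBig m p) = (xP * yP * zP) • p :=
  matrixFactorizationEnd_apply_apply (Amat_mul_Bmat m) (Bmat_mul_Amat m)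

end
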